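/- If A and B are DMV-algebras and f : A → B is a homomorphism of the underlying MV-algebra reducts (i.e., f preserves ⊕, * and 0), then f preserves every operation δ_n, i.e., f(δ_n x) = δ_n f(x) for all x ∈ A and n ≥ 1; hence f is a homomorphism of DMV-algebras. -/

import Mathlib

/-- An MV-algebra: an abelian monoid `(A, ⊕, 0)` with an involution `*` satisfying
the Łukasiewicz axioms. -/
class MVAlgebra (A : Type) where
  oplus : A → A → A
  star : A → A
  zero : A
  oplus_assoc : ∀ x y z : A, oplus (oplus x y) z = oplus x (oplus y z)
  oplus_comm : ∀ x y : A, oplus x y = oplus y x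
  oplus_zero : ∀ x : A, oplus x zero = x
  star_star : ∀ x : A, star (star x) = x
  lukasiewicz : ∀ x y : A,
    oplus (star (oplus (star x) y)) y = oplus (star (oplus (star y) x)) x
  oplus_star_zero : ∀ x : A, oplus (star zero) x = star zero

namespace MVAlgebra

variable {A : Type} [MVAlgebra A]

/-- The top element `1 = 0*`. -/
def one : A := star zero

/-- The MV-product `x ⊙ y = (x* ⊕ y*)*`. -/
def odot (x y : A) : A := star (oplus (star x) (star y))

/-- `n`-fold ⊕-sum of an element. -/
def nmul : ℕ → A → A
  | 0, _ => zero
  | n + 1, x => oplus (nmul n x) x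

/-- The lattice join `x ∨ y = (x ⊙ y*) ⊕ y`. -/
def sup (x y : A) : A := oplus (odot x (star y)) y

/-- The lattice meet `x ∧ y = (x ⊕ y*) ⊙ y`. -/
def inf (x y : A) : A := odot (oplus x (star y)) y

/-- The MV-order: `x ≤ y` iff `x ⊙ y* = 0`. -/
def le (x y : A) : Prop := odot x (star y) = zero

end MVAlgebra

/-- The rational unit interval `[0,1] ∩ ℚ`. -/
def QI : Type := {q : ℚ // 0 ≤ q ∧ q ≤ 1}

namespace QI

/-- Truncated addition on `[0,1] ∩ ℚ`. -/
def oplus (r s : QI) : QI :=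
  ⟨min (r.1 + s.1) 1, le_min (add_nonneg r.2.1 s.2.1) zero_le_one, min_le_right _ _⟩

/-- Negation `r* = 1 - r` on `[0,1] ∩ ℚ`. -/
def star (r : QI) : QI :=
  ⟨1 - r.1, by constructor <;> [linarith [r.2.2]; linarith [r.2.1]]⟩

def zero : QI := ⟨0, le_refl 0, zero_le_one⟩

def one : QI := ⟨1, zero_le_one, le_refl 1⟩

/-- Ordinary multiplication of rationals, restricted to `[0,1] ∩ ℚ`. -/
def mul (r s : QI) : QI :=
  ⟨r.1 * s.1, mul_nonneg r.2.1 s.2.1, by nlinarith [r.2.1, r.2.2, s.2.1, s.2.2]⟩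

/-- The MV-product `r ⊙ s = (r* ⊕ s*)*` on `[0,1] ∩ ℚ`. -/
def odot (r s : QI) : QI := star (oplus (star r) (star s))

/-- Division by a natural number in `[0,1] ∩ ℚ`. -/
def div (r : QI) (n : ℕ) : QI :=
  ⟨r.1 / n, div_nonneg r.2.1 (Nat.cast_nonneg n), by
    rcases Nat.eq_zero_or_pos n with h | h
    · simp [h]
    · exact le_trans (div_le_self r.2.1 (by exact_mod_cast h)) r.2.2⟩

/-- `1/n` as an element of `[0,1] ∩ ℚ` (with `1/0 = 0`). -/
def oneOver (n : ℕ) : QI := div one n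

/-- Join (maximum) in `[0,1] ∩ ℚ`. -/
def sup (r s : QI) : QI :=
  ⟨max r.1 s.1, le_max_of_le_left r.2.1, max_le r.2.2 s.2.2⟩

/-- Meet (minimum) in `[0,1] ∩ ℚ`. -/
def inf (r s : QI) : QI :=
  ⟨min r.1 s.1, le_min r.2.1 s.2.1, min_le_of_left_le r.2.2⟩

end QI

/-- A DMV-algebra: an MV-algebra with division operators `δ_n` (`n ≥ 1`) satisfying
`n·δ_n x = x` and `δ_n x ⊙ (n-1)·δ_n x = 0`. -/
class DMVAlgebra (A : Type) extends MVAlgebra A where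
  delta : ℕ → A → A
  delta_nmul : ∀ n : ℕ, 1 ≤ n → ∀ x : A, MVAlgebra.nmul n (delta n x) = x
  delta_odot : ∀ n : ℕ, 1 ≤ n → ∀ x : A,
    MVAlgebra.odot (delta n x) (MVAlgebra.nmul (n - 1) (delta n x)) = MVAlgebra.zero

/-- Homomorphism of MV-algebras: preserves `⊕`, `*` and `0`. -/
def IsMVHom {A B : Type} [MVAlgebra A] [MVAlgebra B] (f : A → B) : Prop :=
  (∀ x y : A, f (MVAlgebra.oplus x y) = MVAlgebra.oplus (f x) (f y)) ∧
  (∀ x : A, f (MVAlgebra.star x) = MVAlgebra.star (f x)) ∧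
  f MVAlgebra.zero = MVAlgebra.zero

/-- Homomorphism of DMV-algebras: an MV-homomorphism preserving every `δ_n`. -/
def IsDMVHom {A B : Type} [DMVAlgebra A] [DMVAlgebra B] (f : A → B) : Prop :=
  IsMVHom f ∧ ∀ n : ℕ, 1 ≤ n → ∀ x : A, f (DMVAlgebra.delta n x) = DMVAlgebra.delta n (f x)

/-- Ideal of an MV-algebra: contains `0`, downward closed, closed under `⊕`. -/
def IsMVIdeal {A : Type} [MVAlgebra A] (I : Set A) : Prop :=
  MVAlgebra.zero ∈ I ∧ (∀ x ∈ I, ∀ y : A, MVAlgebra.le y x → y ∈ I) ∧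
  ∀ x ∈ I, ∀ y ∈ I, MVAlgebra.oplus x y ∈ I

/-- Maximal ideal: a proper ideal maximal under inclusion. -/
def IsMaximalMVIdeal {A : Type} [MVAlgebra A] (I : Set A) : Prop :=
  IsMVIdeal I ∧ I ≠ Set.univ ∧
  ∀ J : Set A, IsMVIdeal J → J ≠ Set.univ → I ⊆ J → J = I

/-- Semisimplicity: the intersection of all maximal ideals is `{0}`. -/
def IsSemisimple (A : Type) [MVAlgebra A] : Prop :=
  ∀ x : A, (∀ I : Set A, IsMaximalMVIdeal I → x ∈ I) → x = MVAlgebra.zero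

/-- Bimorphism `[0,1]_ℚ × A → C`: preserves `∨`, `∧` and the partial sum `+`
in each argument separately. -/
def IsQBimorphism {A C : Type} [MVAlgebra A] [MVAlgebra C] (β : QI → A → C) : Prop :=
  (∀ (r s : QI) (a : A), β (QI.sup r s) a = MVAlgebra.sup (β r a) (β s a)) ∧
  (∀ (r s : QI) (a : A), β (QI.inf r s) a = MVAlgebra.inf (β r a) (β s a)) ∧
  (∀ (r s : QI) (a : A), QI.odot r s = QI.zero →
    MVAlgebra.odot (β r a) (β s a) = MVAlgebra.zero ∧
      β (QI.oplus r s) a = MVAlgebra.oplus (β r a) (β s a)) ∧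
  (∀ (r : QI) (a b : A), β r (MVAlgebra.sup a b) = MVAlgebra.sup (β r a) (β r b)) ∧
  (∀ (r : QI) (a b : A), β r (MVAlgebra.inf a b) = MVAlgebra.inf (β r a) (β r b)) ∧
  (∀ (r : QI) (a b : A), MVAlgebra.odot a b = MVAlgebra.zero →
    MVAlgebra.odot (β r a) (β r b) = MVAlgebra.zero ∧
      β r (MVAlgebra.oplus a b) = MVAlgebra.oplus (β r a) (β r b))

/-- `T`, together with the bimorphism `β`, is the semisimple tensor product
`[0,1]_ℚ ⊗ A`: `T` is semisimple and `β` is universal among bimorphisms into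
semisimple MV-algebras. -/
def IsQTensor (A T : Type) [MVAlgebra A] [MVAlgebra T] (β : QI → A → T) : Prop :=
  IsSemisimple T ∧ IsQBimorphism β ∧
  ∀ (C : Type) [MVAlgebra C], IsSemisimple C → ∀ γ : QI → A → C, IsQBimorphism γ →
    ∃! h : T → C, IsMVHom h ∧ ∀ (r : QI) (a : A), h (β r a) = γ r a

/-- The DMV-structure of `T` is the canonical one of `[0,1]_ℚ ⊗ A`:
`δ_n (t ⊗ a) = (t/n) ⊗ a`. -/
def DeltaCompat {A T : Type} [MVAlgebra A] [DMVAlgebra T] (β : QI → A → T) : Prop :=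
  ∀ n : ℕ, 1 ≤ n → ∀ (t : QI) (a : A),
    DMVAlgebra.delta n (β t a) = β (QI.div t n) a

/-!
An MV-homomorphism preserves `⊙` and `n`-fold sums, so it sends `δ_n x` to an element `y` with
`n·y = f x` and `y ⊙ (n-1)·y = 0`; it suffices that these two conditions determine `y`.
Given two such elements `y`, `z`, put `v = y ∧ z`, `a = y ⊙ z*`, `b = z ⊙ y*`. Then `y = v + a`
and `z = v + b` are partial sums and `a ∧ b = 0`. Since `n·y` and `n·z` do not overflow,
`n·y = n·v + n·a` and `n·z = n·v + n·b`, so cancelling `n·v` gives `n·a = n·b`. Disjointness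
passes to multiples, so `n·a = n·a ∧ n·b = 0`; hence `a = b = 0`, i.e. `y ≤ z ≤ y`.
-/

section

-- `⊕` itself is taken by `Sum`.
local infixl:65 " ∔ " => MVAlgebra.oplus
local infixl:70 " ⊙ " => MVAlgebra.odot
local postfix:max "⋆" => MVAlgebra.star

namespace MVAlgebra

variable {A : Type} [MVAlgebra A]

lemma zero_oplus (x : A) : zero ∔ x = x := by
  rw [oplus_comm, oplus_zero]

lemma oplus_one (x : A) : x ∔ zero⋆ = zero⋆ := by
  rw [oplus_comm, oplus_star_zero]

lemma star_injective : Function.Injective (star : A → A) :=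
  Function.LeftInverse.injective star_star

lemma star_oplus_self (x : A) : x⋆ ∔ x = zero⋆ := by
  have h := lukasiewicz x zero⋆
  rwa [oplus_one, star_star, zero_oplus, eq_comm] at h

lemma star_odot (x y : A) : (x ⊙ y)⋆ = x⋆ ∔ y⋆ :=
  star_star _

lemma star_oplus (x y : A) : (x ∔ y)⋆ = x⋆ ⊙ y⋆ := by
  simp only [odot, star_star]

lemma odot_comm (x y : A) : x ⊙ y = y ⊙ x := by
  simp only [odot, oplus_comm]

lemma odot_assoc (x y z : A) : x ⊙ y ⊙ z = x ⊙ (y ⊙ z) := by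
  simp only [odot, star_star, oplus_assoc]

lemma odot_zero (x : A) : x ⊙ zero = zero := by
  simp only [odot, oplus_one, star_star]

lemma odot_one (x : A) : x ⊙ zero⋆ = x := by
  simp only [odot, star_star, oplus_zero]

lemma odot_star_self (x : A) : x ⊙ x⋆ = zero := by
  simp only [odot, star_star, star_oplus_self]

lemma oplus_oplus_oplus_comm (a b c d : A) : a ∔ b ∔ (c ∔ d) = a ∔ c ∔ (b ∔ d) := by
  rw [oplus_assoc, oplus_assoc, ← oplus_assoc b, oplus_comm b c, oplus_assoc c]

lemma oplus_odot_star_of_odot_eq_zero {p q : A} (h : p ⊙ q = zero) : (p ∔ q) ⊙ q⋆ = p := by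
  have hqp : (q⋆ ∔ p⋆)⋆ = zero := by rw [odot_comm] at h; exact h
  have hl := lukasiewicz p⋆ q
  rw [star_star, hqp, zero_oplus] at hl
  simp only [odot, star_star]
  rw [hl, star_star]

lemma oplus_right_cancel_of_odot_eq_zero {p p' q : A} (hp : p ⊙ q = zero)
    (hp' : p' ⊙ q = zero) (h : p ∔ q = p' ∔ q) : p = p' := by
  rw [← oplus_odot_star_of_odot_eq_zero hp, h, oplus_odot_star_of_odot_eq_zero hp']

lemma le_refl (x : A) : le x x :=
  odot_star_self x

lemma sup_eq_left_of_le {p q : A} (h : le p q) : sup q p = q := by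
  have hpq : (p⋆ ∔ q)⋆ = zero := by simpa only [le, odot, star_star] using h
  simp only [sup, odot, star_star]
  rw [lukasiewicz, hpq, zero_oplus]

lemma le_antisymm {p q : A} (h₁ : le p q) (h₂ : le q p) : p = q := by
  have h := sup_eq_left_of_le h₁
  rwa [sup, h₂, zero_oplus] at h

lemma odot_eq_zero_of_le {p q c : A} (h₁ : le p q) (h₂ : q ⊙ c = zero) : p ⊙ c = zero := by
  have hp := oplus_odot_star_of_odot_eq_zero h₁
  rw [star_star] at hp
  rw [← hp, odot_assoc, h₂, odot_zero]

lemma le_trans {p q r : A} (h₁ : le p q) (h₂ : le q r) : le p r :=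
  odot_eq_zero_of_le h₁ h₂

lemma le_oplus_left (p q : A) : le p (p ∔ q) := by
  simp only [le, odot, star_star, ← oplus_assoc, star_oplus_self, oplus_star_zero]

lemma le_oplus_right (p q : A) : le p (q ∔ p) :=
  oplus_comm p q ▸ le_oplus_left p q

lemma odot_le_right (x y : A) : le (x ⊙ y) y := by
  rw [le, odot_assoc, odot_star_self, odot_zero]

lemma odot_le_left (x y : A) : le (x ⊙ y) x :=
  odot_comm y x ▸ odot_le_right y x

lemma star_le_star {p q : A} (h : le p q) : le q⋆ p⋆ := by
  rwa [le, star_star, odot_comm]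

lemma odot_le_odot_right {p q : A} (w : A) (h : le p q) : le (p ⊙ w) (q ⊙ w) := by
  have hp := oplus_odot_star_of_odot_eq_zero h
  rw [star_star] at hp
  rw [← hp, odot_assoc]
  exact odot_le_right _ _

lemma oplus_le_oplus_right {p q : A} (w : A) (h : le p q) : le (p ∔ w) (q ∔ w) := by
  have h' := star_le_star (odot_le_odot_right w⋆ (star_le_star h))
  rwa [← star_oplus, ← star_oplus, star_star, star_star] at h'

lemma oplus_le_oplus_left {p q : A} (w : A) (h : le p q) : le (w ∔ p) (w ∔ q) := by
  rw [oplus_comm w p, oplus_comm w q]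
  exact oplus_le_oplus_right w h

/-- Modus ponens of Łukasiewicz logic, `x ⊙ (x → y) ≤ y`. -/
lemma odot_star_oplus_le (x y : A) : le (x ⊙ (x⋆ ∔ y)) y := by
  change ((x ⊙ (x⋆ ∔ y))⋆ ∔ y⋆⋆)⋆ = zero
  rw [star_star, star_odot, oplus_assoc, lukasiewicz, oplus_comm (y⋆ ∔ x)⋆, ← oplus_assoc,
    star_oplus_self, oplus_star_zero, star_star]

lemma sup_comm (x y : A) : sup x y = sup y x := by
  simp only [sup, odot, star_star]
  exact lukasiewicz x y

lemma le_sup_right (x y : A) : le y (sup x y) :=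
  le_oplus_right y _

lemma le_sup_left (x y : A) : le x (sup x y) :=
  sup_comm y x ▸ le_sup_right y x

lemma sup_le {x y t : A} (h₁ : le x t) (h₂ : le y t) : le (sup x y) t := by
  have h := oplus_le_oplus_right y (odot_le_odot_right y⋆ h₁)
  change le (sup x y) (sup t y) at h
  rwa [sup_eq_left_of_le h₂] at h

lemma star_inf (x y : A) : (inf x y)⋆ = sup x⋆ y⋆ := by
  simp only [inf, sup, odot, star_star]

lemma inf_le_left (x y : A) : le (inf x y) x := by
  rw [inf, odot_comm, oplus_comm]
  exact odot_star_oplus_le y x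

lemma inf_le_right (x y : A) : le (inf x y) y :=
  odot_le_right _ _

lemma le_inf {c x y : A} (h₁ : le c x) (h₂ : le c y) : le c (inf x y) := by
  have h := sup_le (star_le_star h₁) (star_le_star h₂)
  rwa [le, star_star, odot_comm, ← star_inf] at h

lemma inf_eq_left_of_le {x y : A} (h : le x y) : inf x y = x :=
  le_antisymm (inf_le_left x y) (le_inf (le_refl x) h)

lemma inf_self (x : A) : inf x x = x :=
  inf_eq_left_of_le (le_refl x)

lemma inf_comm (x y : A) : inf x y = inf y x :=
  star_injective (by rw [star_inf, star_inf, sup_comm])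

lemma inf_assoc (x y z : A) : inf (inf x y) z = inf x (inf y z) := by
  apply le_antisymm
  · exact le_inf (le_trans (inf_le_left _ _) (inf_le_left x y))
      (le_inf (le_trans (inf_le_left _ _) (inf_le_right x y)) (inf_le_right _ _))
  · exact le_inf (le_inf (inf_le_left _ _) (le_trans (inf_le_right _ _) (inf_le_left y z)))
      (le_trans (inf_le_right _ _) (inf_le_right y z))

lemma oplus_inf (x y z : A) : x ∔ inf y z = inf (x ∔ y) (x ∔ z) := by
  apply le_antisymm
  · exact le_inf (oplus_le_oplus_left x (inf_le_left y z))
      (oplus_le_oplus_left x (inf_le_right y z))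
  · set m := inf (x ∔ y) (x ∔ z)
    have odot_star_le : ∀ w, le m (x ∔ w) → le (m ⊙ x⋆) w := fun w hw => by
      have h := odot_star_oplus_le x⋆ w
      rw [star_star, odot_comm] at h
      exact le_trans (odot_le_odot_right x⋆ hw) h
    have h := oplus_le_oplus_right x
      (le_inf (odot_star_le y (inf_le_left _ _)) (odot_star_le z (inf_le_right _ _)))
    rw [oplus_comm (inf y z)] at h
    exact le_trans (le_sup_left m x) h

lemma inf_eq_odot_star_odot_star (x y : A) : inf x y = y ⊙ (y ⊙ x⋆)⋆ := by
  simp only [inf, odot, star_star, oplus_comm]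

lemma inf_oplus_odot_star (y z : A) : inf y z ∔ y ⊙ z⋆ = y := by
  rw [inf_comm, inf_eq_odot_star_odot_star]
  exact sup_eq_left_of_le (odot_le_left y z⋆)

lemma inf_odot_odot_star (y z : A) : inf y z ⊙ (y ⊙ z⋆) = zero := by
  rw [inf_comm, inf_eq_odot_star_odot_star, odot_assoc, odot_comm (y ⊙ z⋆)⋆, odot_star_self,
    odot_zero]

lemma inf_odot_star_odot_star (y z : A) : inf (y ⊙ z⋆) (z ⊙ y⋆) = zero := by
  have hz : z ∔ inf (y ⊙ z⋆) (z ⊙ y⋆) = z := by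
    rw [oplus_inf, oplus_comm z (y ⊙ z⋆), oplus_comm z (z ⊙ y⋆)]
    change inf (sup y z) _ = z
    rw [sup_comm, sup, ← oplus_inf, oplus_comm, inf_comm, inf_oplus_odot_star]
  have hqz : inf (y ⊙ z⋆) (z ⊙ y⋆) ⊙ z = zero :=
    odot_eq_zero_of_le (inf_le_left _ _)
      (by rw [odot_assoc, odot_comm z⋆, odot_star_self, odot_zero])
  have h := oplus_odot_star_of_odot_eq_zero hqz
  rwa [oplus_comm, hz, odot_star_self, eq_comm] at h

lemma nmul_succ (n : ℕ) (x : A) : nmul (n + 1) x = nmul n x ∔ x :=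
  rfl

lemma nmul_add (k m : ℕ) (x : A) : nmul (k + m) x = nmul k x ∔ nmul m x := by
  induction m with
  | zero => exact (oplus_zero _).symm
  | succ m ih => rw [← Nat.add_assoc, nmul_succ, nmul_succ, ih, oplus_assoc]

lemma le_nmul {n : ℕ} (hn : 0 < n) (x : A) : le x (nmul n x) :=
  match n, hn with
  | m + 1, _ => le_oplus_right x (nmul m x)

lemma eq_zero_of_nmul_eq_zero {n : ℕ} (hn : 0 < n) {x : A} (h : nmul n x = zero) : x = zero := by
  have hx := le_nmul hn x
  rwa [h, le, odot_one] at hx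

lemma nmul_odot_eq_zero_of_lt {n k : ℕ} {y : A} (hy : y ⊙ nmul (n - 1) y = zero) (hk : k < n) :
    nmul k y ⊙ y = zero := by
  obtain ⟨m, hm⟩ := Nat.exists_eq_add_of_le (Nat.le_sub_one_of_lt hk)
  refine odot_eq_zero_of_le (q := nmul (n - 1) y) ?_ (by rwa [odot_comm])
  rw [hm, nmul_add]
  exact le_oplus_left _ _

lemma inf_nmul_eq_zero {a b : A} (h : inf a b = zero) (k : ℕ) : inf (nmul k a) b = zero := by
  induction k with
  | zero =>
    change (zero ∔ b⋆) ⊙ b = zero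
    rw [zero_oplus, odot_comm, odot_star_self]
  | succ k ih =>
    have hb : inf (a ∔ b) b = b := by
      rw [inf_comm]
      exact inf_eq_left_of_le (le_oplus_right b a)
    rw [nmul_succ, oplus_comm, ← hb, ← inf_assoc, ← oplus_inf, ih, oplus_zero, h]

lemma inf_nmul_nmul_eq_zero {a b : A} (h : inf a b = zero) (k m : ℕ) :
    inf (nmul k a) (nmul m b) = zero := by
  have h' : inf b (nmul k a) = zero := by
    rw [inf_comm]
    exact inf_nmul_eq_zero h k
  rw [inf_comm]
  exact inf_nmul_eq_zero h' m

lemma odot_oplus_eq_zero_of_oplus_odot_eq_zero {a b c : A} (hab : a ⊙ b = zero)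
    (h : (a ∔ b) ⊙ c = zero) : a ⊙ (b ∔ c) = zero := by
  have hcb : c ⊙ b = zero := by
    rw [odot_comm]
    exact odot_eq_zero_of_le (le_oplus_right b a) h
  calc a ⊙ (b ∔ c) = (a ∔ b) ⊙ b⋆ ⊙ (c ∔ b) := by
        rw [oplus_odot_star_of_odot_eq_zero hab, oplus_comm]
    _ = (a ∔ b) ⊙ ((c ∔ b) ⊙ b⋆) := by rw [odot_assoc, odot_comm b⋆]
    _ = zero := by rw [oplus_odot_star_of_odot_eq_zero hcb, h]

lemma oplus_odot_eq_zero_of_odot_oplus_eq_zero {a b c : A} (hbc : b ⊙ c = zero)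
    (h : a ⊙ (b ∔ c) = zero) : (a ∔ b) ⊙ c = zero := by
  have hab : a ⊙ b = zero := by
    rw [odot_comm] at h ⊢
    exact odot_eq_zero_of_le (le_oplus_left b c) h
  have hcb : c ⊙ b = zero := by rwa [odot_comm]
  calc (a ∔ b) ⊙ c = (a ∔ b) ⊙ ((c ∔ b) ⊙ b⋆) := by rw [oplus_odot_star_of_odot_eq_zero hcb]
    _ = (a ∔ b) ⊙ b⋆ ⊙ (c ∔ b) := by rw [odot_assoc, odot_comm b⋆]
    _ = zero := by rw [oplus_odot_star_of_odot_eq_zero hab, oplus_comm, h]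

lemma oplus_odot_oplus_eq_zero_of_interchange {a b c d : A} (hab : a ⊙ b = zero)
    (hcd : c ⊙ d = zero) (h : (a ∔ b) ⊙ (c ∔ d) = zero) : (a ∔ c) ⊙ (b ∔ d) = zero := by
  have h₁ : a ⊙ (c ∔ (d ∔ b)) = zero := by
    have h' := odot_oplus_eq_zero_of_oplus_odot_eq_zero hab h
    rwa [oplus_comm b, oplus_assoc] at h'
  have h₂ : c ⊙ (d ∔ b) = zero := by
    refine odot_oplus_eq_zero_of_oplus_odot_eq_zero hcd ?_
    rw [odot_comm]
    exact odot_eq_zero_of_le (le_oplus_right b a) h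
  rw [oplus_comm b d]
  exact oplus_odot_eq_zero_of_odot_oplus_eq_zero h₂ h₁

lemma nmul_oplus_of_odot_eq_zero {n : ℕ} {v t : A} (hvt : v ⊙ t = zero)
    (h : ∀ k < n, nmul k (v ∔ t) ⊙ (v ∔ t) = zero) :
    ∀ k ≤ n, nmul k (v ∔ t) = nmul k v ∔ nmul k t ∧ nmul k v ⊙ nmul k t = zero := by
  intro k hk
  induction k with
  | zero => exact ⟨(oplus_zero zero).symm, odot_zero zero⟩
  | succ k ih =>
    obtain ⟨hsum, horth⟩ := ih (Nat.le_of_succ_le hk)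
    have hk' := h k hk
    rw [hsum] at hk'
    refine ⟨?_, oplus_odot_oplus_eq_zero_of_interchange horth hvt hk'⟩
    rw [nmul_succ, nmul_succ, nmul_succ, hsum]
    exact oplus_oplus_oplus_comm _ _ _ _

lemma nmul_eq_nmul_inf_oplus_nmul_odot_star {n : ℕ} {y : A} (hy : y ⊙ nmul (n - 1) y = zero)
    (z : A) : nmul n y = nmul n (inf y z) ∔ nmul n (y ⊙ z⋆) ∧
      nmul n (inf y z) ⊙ nmul n (y ⊙ z⋆) = zero := by
  have h := nmul_oplus_of_odot_eq_zero (inf_odot_odot_star y z)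
    (fun k hk => by rw [inf_oplus_odot_star]; exact nmul_odot_eq_zero_of_lt hy hk) n le_rfl
  rwa [inf_oplus_odot_star] at h

theorem eq_of_nmul_eq {n : ℕ} (hn : 0 < n) {y z : A} (h : nmul n y = nmul n z)
    (hy : y ⊙ nmul (n - 1) y = zero) (hz : z ⊙ nmul (n - 1) z = zero) : y = z := by
  obtain ⟨ey, oy⟩ := nmul_eq_nmul_inf_oplus_nmul_odot_star hy z
  obtain ⟨ez, oz⟩ := nmul_eq_nmul_inf_oplus_nmul_odot_star hz y
  rw [inf_comm] at ez oz
  have hab : nmul n (y ⊙ z⋆) = nmul n (z ⊙ y⋆) :=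
    oplus_right_cancel_of_odot_eq_zero (by rwa [odot_comm]) (by rwa [odot_comm])
      (by rw [oplus_comm, ← ey, h, ez, oplus_comm])
  have ha := inf_nmul_nmul_eq_zero (inf_odot_star_odot_star y z) n n
  rw [← hab, inf_self] at ha
  exact le_antisymm (eq_zero_of_nmul_eq_zero hn ha) (eq_zero_of_nmul_eq_zero hn (hab ▸ ha))

end MVAlgebra

namespace DMVAlgebra

open MVAlgebra

variable {A : Type} [DMVAlgebra A]

theorem eq_delta {n : ℕ} (hn : 1 ≤ n) {x y : A} (h : nmul n y = x)
    (hy : y ⊙ nmul (n - 1) y = zero) : y = delta n x :=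
  eq_of_nmul_eq hn (by rw [h, delta_nmul n hn]) hy (delta_odot n hn x)

end DMVAlgebra

namespace IsMVHom

open MVAlgebra DMVAlgebra

section

variable {A B : Type} [MVAlgebra A] [MVAlgebra B] {f : A → B}

lemma map_odot (hf : IsMVHom f) (x y : A) : f (x ⊙ y) = f x ⊙ f y := by
  simp only [odot, hf.1, hf.2.1]

lemma map_nmul (hf : IsMVHom f) (k : ℕ) (x : A) : f (nmul k x) = nmul k (f x) := by
  induction k with
  | zero => exact hf.2.2
  | succ k ih => rw [nmul_succ, nmul_succ, hf.1, ih]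

end

variable {A B : Type} [DMVAlgebra A] [DMVAlgebra B] {f : A → B}

lemma map_delta (hf : IsMVHom f) {n : ℕ} (hn : 1 ≤ n) (x : A) : f (delta n x) = delta n (f x) :=
  eq_delta hn (by rw [← hf.map_nmul, delta_nmul n hn])
    (by rw [← hf.map_nmul, ← hf.map_odot, delta_odot n hn, hf.2.2])

end IsMVHom

end

/-- If `A` and `B` are DMV-algebras and `f : A → B` is a homomorphism
of the underlying MV-algebra reducts, then `f` preserves every `δ_n` (`n ≥ 1`);
hence `f` is a homomorphism of DMV-algebras. -/
theorem mvHom_is_dmvHom {A B : Type} [DMVAlgebra A] [DMVAlgebra B]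
    (f : A → B) (hf : IsMVHom f) :
    (∀ n : ℕ, 1 ≤ n → ∀ x : A,
      f (DMVAlgebra.delta n x) = DMVAlgebra.delta n (f x)) ∧ IsDMVHom f :=
  ⟨fun _ => hf.map_delta, hf, fun _ => hf.map_delta⟩
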